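/- Let p be an odd prime and k = 𝔽_p = ZMod p. Let 𝔰𝔩₂(k) be the Lie algebra of trace-zero 2×2 matrices over k, with standard basis e = E₁₂, f = E₂₁, h = E₁₁ − E₂₂, and let U = U(𝔰𝔩₂(k)) with canonical embedding ι. Set E = ι(e), F = ι(f), H = ι(h). Then the four elements Eᵖ, Fᵖ, Hᵖ − H, and Δ = 4·F·E + H² + 2·H all lie in the center of U. -/

import Mathlib

/-!
In characteristic `p` left and right multiplication by `a` commute, so
`ad (a ^ p) = (ad a) ^ p`. On `𝔰𝔩₂` the operator `ad e` sends `f ↦ h ↦ -2e ↦ 0` and kills `e`,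
so `(ad e) ^ p` vanishes on the generators once `p ≥ 3` and `e ^ p` is central; symmetrically
for `f`. Since `ad h` acts on `e` and `f` by the eigenvalues `±2 ∈ 𝔽_p`, which are fixed by
Frobenius, `ad (h ^ p - h) = (ad h) ^ p - ad h` kills `e` and `f`. The Casimir element commutes
with `e`, `f`, `h` by a direct computation with the relations. Finally, an element of `U(𝔤)`
commuting with `ι 𝔤` is central, because `ι 𝔤` generates `U(𝔤)`.
-/

open LieAlgebra.SpecialLinear

/-- `e = E₁₂` in `𝔰𝔩₂(ZMod p)`. -/
noncomputable def sl2e (p : ℕ) : sl (Fin 2) (ZMod p) := LieAlgebra.SpecialLinear.single (R := ZMod p) 0 1 (by decide) 1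

/-- `f = E₂₁` in `𝔰𝔩₂(ZMod p)`. -/
noncomputable def sl2f (p : ℕ) : sl (Fin 2) (ZMod p) := LieAlgebra.SpecialLinear.single (R := ZMod p) 1 0 (by decide) 1

/-- `h = E₁₁ − E₂₂` in `𝔰𝔩₂(ZMod p)`. -/
noncomputable def sl2h (p : ℕ) : sl (Fin 2) (ZMod p) :=
  ⟨Matrix.single 0 0 (1 : ZMod p) - Matrix.single 1 1 (1 : ZMod p),
    show _ ∈ LinearMap.ker (Matrix.traceLinearMap (Fin 2) (ZMod p) (ZMod p)) by
      rw [LinearMap.mem_ker]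
      simp [Matrix.trace_sub, Matrix.trace_single_eq_same]⟩

attribute [local instance 100] LieRing.ofAssociativeRing

open LieAlgebra

theorem Module.End.pow_apply_of_apply_eq_smul {R M : Type*} [CommSemiring R] [AddCommMonoid M]
    [Module R M] {f : Module.End R M} {m : M} {c : R} (h : f m = c • m) (n : ℕ) :
    (f ^ n) m = c ^ n • m := by
  induction n with
  | zero => simp
  | succ n ih => rw [pow_succ', Module.End.mul_apply, ih, map_smul, h, smul_smul, pow_succ]

theorem LieAlgebra.ad_pow_char {R A : Type*} [CommRing R] [Ring A] [Algebra R A] (p : ℕ)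
    [Fact p.Prime] [CharP R p] (a : A) :
    ad R A (a ^ p) = ad R A a ^ p := by
  cases subsingleton_or_nontrivial A with
  | inl _ => exact Subsingleton.elim _ _
  | inr _ =>
    have : CharP (Module.End R A) p := by
      rw [CharP.charP_iff_prime_eq_zero Fact.out, ← map_natCast (algebraMap R (Module.End R A)),
        CharP.cast_eq_zero, map_zero]
    rw [ad_eq_lmul_left_sub_lmul_right, Pi.sub_apply, Pi.sub_apply,
      sub_pow_char_of_commute _ (LinearMap.commute_mulLeft_right a a), LinearMap.pow_mulLeft,
      LinearMap.pow_mulRight]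

namespace UniversalEnvelopingAlgebra

variable {R L : Type*} [CommRing R] [LieRing L] [LieAlgebra R L]

theorem adjoin_range_ι :
    Algebra.adjoin R (Set.range (ι R : L → UniversalEnvelopingAlgebra R L)) = ⊤ := by
  have hι : Set.range (ι R : L → UniversalEnvelopingAlgebra R L) =
      mkAlgHom R L '' Set.range (TensorAlgebra.ι R) := by
    rw [← Set.range_comp]; rfl
  rw [hι, ← AlgHom.map_adjoin, TensorAlgebra.adjoin_range_ι, Algebra.map_top,
    AlgHom.range_eq_top]
  exact RingCon.mkₐ_surjective (α := R) _

theorem mem_center_of_forall_commute_ι {z : UniversalEnvelopingAlgebra R L}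
    (hz : ∀ x : L, Commute (ι R x) z) :
    z ∈ Subalgebra.center R (UniversalEnvelopingAlgebra R L) := by
  have hle : Algebra.adjoin R (Set.range (ι R : L → UniversalEnvelopingAlgebra R L)) ≤
      Subalgebra.centralizer R {z} :=
    Algebra.adjoin_le <| Set.range_subset_iff.mpr fun x ↦
      Set.mem_centralizer_iff.mpr fun _ hw ↦ hw ▸ (hz x).eq.symm
  rw [adjoin_range_ι] at hle
  exact Subalgebra.mem_center_iff.mpr fun u ↦
    ((Subalgebra.mem_centralizer_iff R).mp (hle trivial) z rfl).symm

end UniversalEnvelopingAlgebra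

section CharP

variable {R A : Type*} [CommRing R] [Ring A] [Algebra R A] (p : ℕ) [Fact p.Prime] [CharP R p]
  {a b : A}

theorem commute_pow_char_of_ad_pow_apply_eq_zero {n : ℕ} (hn : n ≤ p)
    (hab : (ad R A a ^ n) b = 0) : Commute b (a ^ p) := by
  rw [← Commute.symm_iff, commute_iff_lie_eq, ← ad_apply R, ad_pow_char,
    Module.End.pow_map_zero_of_le hn hab]

theorem commute_pow_char_sub_self_of_lie_eq_smul {c : R} (hc : c ^ p = c)
    (hab : ⁅a, b⁆ = c • b) : Commute b (a ^ p - a) := by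
  have hpow := Module.End.pow_apply_of_apply_eq_smul (f := ad R A a) hab p
  rw [← Commute.symm_iff, commute_iff_lie_eq, sub_lie, ← ad_apply R, ad_pow_char, hpow, hc, hab,
    sub_self]

end CharP

section Sl2Relations

variable {A : Type*} [Ring A] {e f h : A}

theorem ad_sq_apply_eq_zero (R : Type*) [CommRing R] [Algebra R A] (hhe : ⁅h, e⁆ = 2 • e) :
    (ad R A e ^ 2) h = 0 := by
  simp [sq, ← lie_skew e h, hhe, -nsmul_eq_mul]

theorem ad_pow_three_apply_eq_zero (R : Type*) [CommRing R] [Algebra R A]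
    (hef : ⁅e, f⁆ = h) (hhe : ⁅h, e⁆ = 2 • e) : (ad R A e ^ 3) f = 0 := by
  rw [pow_succ, Module.End.mul_apply, ad_apply, hef, ad_sq_apply_eq_zero R hhe]

theorem commute_e_pow_char (R : Type*) [CommRing R] [Algebra R A] (p : ℕ) [Fact p.Prime]
    [CharP R p] (hp3 : 3 ≤ p) (hef : ⁅e, f⁆ = h) (hhe : ⁅h, e⁆ = 2 • e) :
    Commute e (e ^ p) ∧ Commute f (e ^ p) ∧ Commute h (e ^ p) :=
  ⟨(Commute.refl e).pow_right p,
    commute_pow_char_of_ad_pow_apply_eq_zero p hp3 (ad_pow_three_apply_eq_zero R hef hhe),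
    commute_pow_char_of_ad_pow_apply_eq_zero p (by omega) (ad_sq_apply_eq_zero R hhe)⟩

theorem commute_f_pow_char (R : Type*) [CommRing R] [Algebra R A] (p : ℕ) [Fact p.Prime]
    [CharP R p] (hp3 : 3 ≤ p) (hef : ⁅e, f⁆ = h) (hhf : ⁅h, f⁆ = -(2 • f)) :
    Commute e (f ^ p) ∧ Commute f (f ^ p) ∧ Commute h (f ^ p) := by
  obtain ⟨hf, he, hh⟩ := commute_e_pow_char R p hp3 (e := f) (f := e) (h := -h)
    (by rw [← lie_skew, hef]) (by rw [neg_lie, hhf, neg_neg])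
  exact ⟨he, hf, Commute.neg_left_iff.mp hh⟩

/- In each `key` below, every summand on the right contains a defining relation written as
`lhs - rhs`, so it vanishes; the identity itself holds in any ring. -/

theorem commute_casimir_e (hef : ⁅e, f⁆ = h) (hhe : ⁅h, e⁆ = 2 • e) :
    Commute e (4 * f * e + h ^ 2 + 2 * h) := by
  have key : ⁅e, 4 * f * e + h ^ 2 + 2 * h⁆ =
      4 * (⁅e, f⁆ - h) * e - (⁅h, e⁆ - 2 • e) * h - h * (⁅h, e⁆ - 2 • e) := by
    simp only [Ring.lie_def]; noncomm_ring
  rw [commute_iff_lie_eq, key, hef, hhe]; simp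

theorem commute_casimir_f (hef : ⁅e, f⁆ = h) (hhf : ⁅h, f⁆ = -(2 • f)) :
    Commute f (4 * f * e + h ^ 2 + 2 * h) := by
  have key : ⁅f, 4 * f * e + h ^ 2 + 2 * h⁆ =
      -(4 * f * (⁅e, f⁆ - h)) - (⁅h, f⁆ + 2 • f) * h - h * (⁅h, f⁆ + 2 • f) := by
    simp only [Ring.lie_def]; noncomm_ring
  rw [commute_iff_lie_eq, key, hef, hhf]; simp

theorem commute_casimir_h (hhe : ⁅h, e⁆ = 2 • e) (hhf : ⁅h, f⁆ = -(2 • f)) :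
    Commute h (4 * f * e + h ^ 2 + 2 * h) := by
  have key : ⁅h, 4 * f * e + h ^ 2 + 2 * h⁆ =
      4 * (⁅h, f⁆ + 2 • f) * e + 4 * f * (⁅h, e⁆ - 2 • e) := by
    simp only [Ring.lie_def]; noncomm_ring
  rw [commute_iff_lie_eq, key, hhe, hhf]; simp

end Sl2Relations

section Sl2

variable (p : ℕ)

theorem lie_sl2e_sl2f : ⁅sl2e p, sl2f p⁆ = sl2h p := by
  ext i j
  rw [sl_bracket]
  fin_cases i <;> fin_cases j <;> norm_num [sl2e, sl2f, sl2h, Matrix.mul_apply, Matrix.single]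

theorem lie_sl2h_sl2e : ⁅sl2h p, sl2e p⁆ = 2 • sl2e p := by
  ext i j
  rw [sl_bracket]
  fin_cases i <;> fin_cases j <;> norm_num [sl2e, sl2h, Matrix.mul_apply, Matrix.single]

theorem lie_sl2h_sl2f : ⁅sl2h p, sl2f p⁆ = -(2 • sl2f p) := by
  ext i j
  rw [sl_bracket]
  fin_cases i <;> fin_cases j <;> norm_num [sl2f, sl2h, Matrix.mul_apply, Matrix.single]

theorem sl2_eq_combination (x : sl (Fin 2) (ZMod p)) :
    x = x.val 0 1 • sl2e p + x.val 1 0 • sl2f p + x.val 0 0 • sl2h p := by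
  have htr : x.val 0 0 + x.val 1 1 = 0 := by
    have hx : Matrix.trace x.val = 0 := x.property
    simpa only [Matrix.trace, Matrix.diag, Fin.sum_univ_two] using hx
  ext i j
  fin_cases i <;> fin_cases j <;> simp [sl2e, sl2f, sl2h, Matrix.single]
  linear_combination htr

theorem UniversalEnvelopingAlgebra.mem_center_of_commute_sl2
    {z : UniversalEnvelopingAlgebra (ZMod p) (sl (Fin 2) (ZMod p))}
    (hE : Commute (ι (ZMod p) (sl2e p)) z) (hF : Commute (ι (ZMod p) (sl2f p)) z)
    (hH : Commute (ι (ZMod p) (sl2h p)) z) :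
    z ∈ Subalgebra.center (ZMod p) (UniversalEnvelopingAlgebra (ZMod p) (sl (Fin 2) (ZMod p))) := by
  refine mem_center_of_forall_commute_ι fun x ↦ ?_
  rw [sl2_eq_combination p x, map_add, map_add, map_smul, map_smul, map_smul]
  exact ((hE.smul_left _).add_left (hF.smul_left _)).add_left (hH.smul_left _)

end Sl2

open UniversalEnvelopingAlgebra in
/-- In `U(𝔰𝔩₂(𝔽_p))` for an odd prime `p`, the elements `Eᵖ`, `Fᵖ`,
`Hᵖ − H` and `Δ = 4FE + H² + 2H` are central. -/
theorem sl2_central_elements (p : ℕ) (hp : p.Prime) (hodd : Odd p) :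
    letI U := UniversalEnvelopingAlgebra (ZMod p) (sl (Fin 2) (ZMod p))
    letI ι := UniversalEnvelopingAlgebra.ι (ZMod p) (L := sl (Fin 2) (ZMod p))
    letI E : U := ι (sl2e p)
    letI F : U := ι (sl2f p)
    letI H : U := ι (sl2h p)
    E ^ p ∈ Subalgebra.center (ZMod p) U ∧
    F ^ p ∈ Subalgebra.center (ZMod p) U ∧
    H ^ p - H ∈ Subalgebra.center (ZMod p) U ∧
    4 * F * E + H ^ 2 + 2 * H ∈ Subalgebra.center (ZMod p) U := by
  have : Fact p.Prime := ⟨hp⟩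
  have hp3 : 3 ≤ p := by
    obtain ⟨k, rfl⟩ := hodd
    have := hp.two_le
    omega
  set E := ι (ZMod p) (sl2e p)
  set F := ι (ZMod p) (sl2f p)
  set H := ι (ZMod p) (sl2h p)
  have hEF : ⁅E, F⁆ = H := by rw [← LieHom.map_lie, lie_sl2e_sl2f]
  have hHE : ⁅H, E⁆ = 2 • E := by rw [← LieHom.map_lie, lie_sl2h_sl2e, map_nsmul]
  have hHF : ⁅H, F⁆ = -(2 • F) := by rw [← LieHom.map_lie, lie_sl2h_sl2f, map_neg, map_nsmul]
  obtain ⟨hE_Ep, hF_Ep, hH_Ep⟩ := commute_e_pow_char (ZMod p) p hp3 hEF hHE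
  obtain ⟨hE_Fp, hF_Fp, hH_Fp⟩ := commute_f_pow_char (ZMod p) p hp3 hEF hHF
  have hE_Hp : Commute E (H ^ p - H) := commute_pow_char_sub_self_of_lie_eq_smul p
    (ZMod.pow_card 2) (by rw [hHE, two_nsmul, two_smul])
  have hF_Hp : Commute F (H ^ p - H) := commute_pow_char_sub_self_of_lie_eq_smul p
    (ZMod.pow_card (-2)) (by rw [hHF, neg_smul, two_nsmul, two_smul])
  exact ⟨mem_center_of_commute_sl2 p hE_Ep hF_Ep hH_Ep,
    mem_center_of_commute_sl2 p hE_Fp hF_Fp hH_Fp,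
    mem_center_of_commute_sl2 p hE_Hp hF_Hp (((Commute.refl H).pow_right p).sub_right (.refl H)),
    mem_center_of_commute_sl2 p (commute_casimir_e hEF hHE) (commute_casimir_f hEF hHF)
      (commute_casimir_h hHE hHF)⟩
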